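/- arXiv:1908.05093 — 5 statements merged into one kernel-verified Lean document; each statement's English description precedes it below -/
import Mathlib

section
/- Let g ∈ 𝕊 be a nonzero split quaternion. The real system of linear equations x g = 0 in x ∈ 𝕊 has a nontrivial solution if and only if g ḡ = 0, and in that case the solution space {x ∈ 𝕊 : x g = 0} is a real vector space of dimension 2. -/
/-!
Since `g * star g = star g * g` is a real scalar, `x * g = 0` with `x ≠ 0` forces `g * star g = 0`,
and conversely `star g` is then a nonzero solution. For the dimension: the kernel of `x ↦ x * g`
contains `star g` and its image contains `g`, and both are closed under left multiplication by `i`.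
The subalgebra `ℝ[i] ≅ ℂ` acts freely, because `star z * z = s² + t²` for `z = s + t i`; hence `q`
and `i * q` are independent whenever `q ≠ 0`.
Kernel and image thus both have dimension at least `2`, and their dimensions add up to `4`.
-/

notation "𝕊" => QuaternionAlgebra ℝ (-1) 0 1

namespace QuaternionAlgebra

open scoped Quaternion

theorem mul_star_eq_zero_of_mul_eq_zero {R : Type*} [CommRing R] [IsDomain R] {c₁ c₂ c₃ : R}
    {x g : ℍ[R,c₁,c₂,c₃]} (hx : x ≠ 0) (h : x * g = 0) : g * star g = 0 := by
  have hsmul : (g * star g).re • x = 0 := by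
    rw [← mul_coe_eq_smul, ← mul_star_eq_coe, ← mul_assoc, h, zero_mul]
  rw [mul_star_eq_coe, (smul_eq_zero.mp hsmul).resolve_right hx, coe_zero]

theorem star_mk_mul_mk {c₁ c₃ : ℝ} (s t : ℝ) :
    star (⟨s, t, 0, 0⟩ : ℍ[ℝ,c₁,0,c₃]) * ⟨s, t, 0, 0⟩ =
      ((s ^ 2 - c₁ * t ^ 2 : ℝ) : ℍ[ℝ,c₁,0,c₃]) := by
  ext <;> simp [-coe_pow] <;> ring

theorem linearIndependent_pair_mk_mul {c₁ c₃ : ℝ} (hc₁ : c₁ < 0) {q : ℍ[ℝ,c₁,0,c₃]} (hq : q ≠ 0) :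
    LinearIndependent ℝ ![q, ⟨0, 1, 0, 0⟩ * q] := by
  rw [LinearIndependent.pair_iff]
  intro s t hst
  have hz : (⟨s, t, 0, 0⟩ : ℍ[ℝ,c₁,0,c₃]) * q = 0 := by
    rw [← hst]; ext <;> simp <;> ring
  have hnorm : (s ^ 2 - c₁ * t ^ 2) • q = 0 := by
    rw [← coe_mul_eq_smul, ← star_mk_mul_mk, mul_assoc, hz, mul_zero]
  have h0 : s ^ 2 - c₁ * t ^ 2 = 0 := (smul_eq_zero.mp hnorm).resolve_right hq
  have ht : t ^ 2 = 0 := by nlinarith [sq_nonneg s, sq_nonneg t]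
  have hs : s ^ 2 = 0 := by nlinarith
  exact ⟨pow_eq_zero_iff two_ne_zero |>.mp hs, pow_eq_zero_iff two_ne_zero |>.mp ht⟩

theorem two_le_finrank_of_mem {c₁ c₃ : ℝ} (hc₁ : c₁ < 0) {p : Submodule ℝ ℍ[ℝ,c₁,0,c₃]}
    {q : ℍ[ℝ,c₁,0,c₃]} (hq : q ≠ 0) (hqp : q ∈ p) (hiqp : ⟨0, 1, 0, 0⟩ * q ∈ p) :
    2 ≤ Module.finrank ℝ p := by
  have hspan : Submodule.span ℝ (Set.range ![q, ⟨0, 1, 0, 0⟩ * q]) ≤ p := by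
    rw [Submodule.span_le, Matrix.range_cons_cons_empty]
    exact Set.insert_subset hqp (Set.singleton_subset_iff.mpr hiqp)
  calc 2 = Module.finrank ℝ (Submodule.span ℝ (Set.range ![q, ⟨0, 1, 0, 0⟩ * q])) := by
        rw [finrank_span_eq_card (linearIndependent_pair_mk_mul hc₁ hq), Fintype.card_fin]
    _ ≤ Module.finrank ℝ p := Submodule.finrank_mono hspan

end QuaternionAlgebra

/-- For a nonzero split quaternion `g`, the linear system `x g = 0` has a
nontrivial solution iff `g ḡ = 0`, in which case the solution space has real
dimension `2`. -/
theorem solutions_of_xg_eq_zero (g : 𝕊) (hg : g ≠ 0) :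
    ((∃ x : 𝕊, x ≠ 0 ∧ x * g = 0) ↔ g * star g = 0) ∧
    (g * star g = 0 →
      Module.finrank ℝ (LinearMap.ker (LinearMap.mulRight ℝ g)) = 2) := by
  have hstar : star g * g = g * star g := star_comm_self' g
  refine ⟨⟨fun ⟨x, hx, hxg⟩ => QuaternionAlgebra.mul_star_eq_zero_of_mul_eq_zero hx hxg,
    fun h => ⟨star g, star_ne_zero.mpr hg, hstar.trans h⟩⟩, fun h => ?_⟩
  set f := LinearMap.mulRight ℝ g
  have hker : 2 ≤ Module.finrank ℝ (LinearMap.ker f) :=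
    QuaternionAlgebra.two_le_finrank_of_mem neg_one_lt_zero (star_ne_zero.mpr hg) (hstar.trans h)
      (show _ * star g * g = 0 by rw [mul_assoc, hstar, h, mul_zero])
  have hrange : 2 ≤ Module.finrank ℝ (LinearMap.range f) :=
    QuaternionAlgebra.two_le_finrank_of_mem neg_one_lt_zero hg ⟨1, one_mul g⟩ ⟨_, rfl⟩
  have hsum := f.finrank_range_add_finrank_ker
  rw [QuaternionAlgebra.finrank_eq_four] at hsum
  omega
end

section
/- Let h, g be nonzero split quaternions with h h̄ = 0, g ḡ = 0, g h̄ = 0 and h ḡ = 0 (so [h]∨[g] lies on a left ruling). Then the set of solutions x ∈ 𝕊 of x h = g is exactly { u + λ h̄ + μ i h̄ : λ, μ ∈ ℝ } where u = (g₀ + g₁ i)(h₀ + h₁ i)⁻¹. -/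
/-!
Write `h = z + w j` with `z = h₀ + h₁ i` and `w = h₂ + h₃ i` in `ℝ[i] ≅ ℂ`. On the null quadric
`|z| = |w|`, so `z ≠ 0`. The `j`-part of `h ḡ = 0` says `g₂ + g₃ i = (g₀ + g₁ i) z⁻¹ w`, which is
exactly `u h = g`. The `j`-part of `y h = 0` determines the `j`-part of `y` from its `ℝ[i]`-part `c`,
forcing `y = c z̄⁻¹ h̄`; conversely `h̄ h = h h̄ = 0` kills every `c h̄`. So the solutions form the
coset `u + ℝ[i] h̄`.
-/

open QuaternionAlgebra

namespace SplitQuaternion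

def complexPart (x : 𝕊) : 𝕊 := ⟨x.re, x.imI, 0, 0⟩

theorem mul_star_eq_zero_iff (x : 𝕊) :
    x * star x = 0 ↔ x.re ^ 2 + x.imI ^ 2 = x.imJ ^ 2 + x.imK ^ 2 := by
  simp only [QuaternionAlgebra.ext_iff, re_mul, imI_mul, imJ_mul, imK_mul, re_star, imI_star,
    imJ_star, imK_star, re_zero, imI_zero, imJ_zero, imK_zero]
  constructor
  · rintro ⟨hre, -⟩
    linear_combination hre
  · intro hx
    refine ⟨by linear_combination hx, by ring, by ring, by ring⟩

theorem normSq_complexPart_ne_zero {h : 𝕊} (h0 : h ≠ 0) (hn : h * star h = 0) :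
    h.re ^ 2 + h.imI ^ 2 ≠ 0 := by
  rw [mul_star_eq_zero_iff] at hn
  contrapose! h0
  have hre : h.re = 0 := by nlinarith [sq_nonneg h.re, sq_nonneg h.imI]
  have himI : h.imI = 0 := by nlinarith [sq_nonneg h.re, sq_nonneg h.imI]
  have himJ : h.imJ = 0 := by nlinarith [sq_nonneg h.imJ, sq_nonneg h.imK]
  have himK : h.imK = 0 := by nlinarith [sq_nonneg h.imJ, sq_nonneg h.imK]
  ext <;> assumption

theorem complexPart_mul_star (x : 𝕊) :
    complexPart x * star (complexPart x) = ((x.re ^ 2 + x.imI ^ 2 : ℝ) : 𝕊) := by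
  ext <;> simp only [complexPart, star_mk, mk_mul_mk, re_coe, imI_coe, imJ_coe, imK_coe] <;> ring

theorem inverse_complexPart {h : 𝕊} (hz : h.re ^ 2 + h.imI ^ 2 ≠ 0) :
    Ring.inverse (complexPart h) = (h.re ^ 2 + h.imI ^ 2)⁻¹ • star (complexPart h) := by
  have mul_inv : complexPart h * ((h.re ^ 2 + h.imI ^ 2)⁻¹ • star (complexPart h)) = 1 := by
    rw [mul_smul_comm, complexPart_mul_star, ← coe_smul, smul_eq_mul, inv_mul_cancel₀ hz, coe_one]
  have inv_mul : (h.re ^ 2 + h.imI ^ 2)⁻¹ • star (complexPart h) * complexPart h = 1 := by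
    rw [smul_mul_assoc, star_comm_self', complexPart_mul_star, ← coe_smul, smul_eq_mul,
      inv_mul_cancel₀ hz, coe_one]
  exact Ring.inverse_unit ⟨_, _, mul_inv, inv_mul⟩

theorem complexPart_mul_inverse_mul {h g : 𝕊} (hz : h.re ^ 2 + h.imI ^ 2 ≠ 0)
    (gh : h * star g = 0) : complexPart g * Ring.inverse (complexPart h) * h = g := by
  rw [inverse_complexPart hz]
  obtain ⟨a, b, c, d⟩ := h
  obtain ⟨p, q, r, s⟩ := g
  simp only [complexPart, star_mk, smul_mk, mk_mul_mk, QuaternionAlgebra.ext_iff, re_zero,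
    imI_zero, imJ_zero, imK_zero, smul_eq_mul] at hz gh ⊢
  obtain ⟨-, -, hJ, hK⟩ := gh
  refine ⟨?_, ?_, ?_, ?_⟩ <;> field_simp
  · ring
  · ring
  · linear_combination a * hJ + b * hK
  · linear_combination a * hK - b * hJ

theorem mul_eq_zero_iff_exists_smul_star {h y : 𝕊} (hz : h.re ^ 2 + h.imI ^ 2 ≠ 0)
    (hn : h * star h = 0) :
    y * h = 0 ↔ ∃ lam mu : ℝ, y = lam • star h + mu • ((⟨0, 1, 0, 0⟩ : 𝕊) * star h) := by
  constructor
  · intro hy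
    obtain ⟨a, b, c, d⟩ := h
    obtain ⟨y₀, y₁, y₂, y₃⟩ := y
    -- `lam + mu i = (y₀ + y₁ i) / (a - b i)`, the quotient of the `ℝ[i]`-parts of `y` and `star h`
    refine ⟨(y₀ * a - y₁ * b) / (a ^ 2 + b ^ 2), (y₀ * b + y₁ * a) / (a ^ 2 + b ^ 2), ?_⟩
    simp only [star_mk, smul_mk, mk_mul_mk, mk_add_mk, QuaternionAlgebra.ext_iff, re_zero,
      imI_zero, imJ_zero, imK_zero, smul_eq_mul] at hz hy ⊢
    obtain ⟨-, -, hJ, hK⟩ := hy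
    refine ⟨?_, ?_, ?_, ?_⟩ <;> field_simp
    · ring
    · ring
    · linear_combination a * hJ - b * hK
    · linear_combination a * hK + b * hJ
  · rintro ⟨lam, mu, rfl⟩
    have hn' : star h * h = 0 := (star_comm_self' h).trans hn
    rw [add_mul, smul_mul_assoc, smul_mul_assoc, mul_assoc, hn', mul_zero, smul_zero, smul_zero,
      add_zero]

end SplitQuaternion

open SplitQuaternion in
theorem affine_two_plane_of_solutions_general (h g : 𝕊) (h0 : h ≠ 0)
    (hn : h * star h = 0) (gh : h * star g = 0) :
    {x : 𝕊 | x * h = g} =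
      {x : 𝕊 | ∃ lam mu : ℝ,
        x = (⟨g.re, g.imI, 0, 0⟩ : 𝕊) * Ring.inverse (⟨h.re, h.imI, 0, 0⟩ : 𝕊)
            + lam • star h + mu • ((⟨0, 1, 0, 0⟩ : 𝕊) * star h)} := by
  have hz := normSq_complexPart_ne_zero h0 hn
  set u := complexPart g * Ring.inverse (complexPart h)
  ext x
  calc x * h = g ↔ (x - u) * h = 0 := by
        rw [sub_mul, complexPart_mul_inverse_mul hz gh, sub_eq_zero]
    _ ↔ ∃ lam mu : ℝ, x - u = lam • star h + mu • ((⟨0, 1, 0, 0⟩ : 𝕊) * star h) :=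
      mul_eq_zero_iff_exists_smul_star hz hn
    _ ↔ ∃ lam mu : ℝ, x = u + lam • star h + mu • ((⟨0, 1, 0, 0⟩ : 𝕊) * star h) := by
      simp only [sub_eq_iff_eq_add', add_assoc]

/-- If `[h] ∨ [g]` lies on a left ruling of the null quadric, the affine
two-plane of solutions of `x h = g` is `u + λ h̄ + μ i h̄` with
`u = (g₀ + g₁ i)(h₀ + h₁ i)⁻¹`. -/
theorem affine_two_plane_of_solutions (h g : 𝕊) (h0 : h ≠ 0) (g0 : g ≠ 0)
    (hn : h * star h = 0) (gn : g * star g = 0)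
    (hg : g * star h = 0) (gh : h * star g = 0) :
    {x : 𝕊 | x * h = g} =
      {x : 𝕊 | ∃ lam mu : ℝ,
        x = (⟨g.re, g.imI, 0, 0⟩ : 𝕊) * Ring.inverse (⟨h.re, h.imI, 0, 0⟩ : 𝕊)
            + lam • star h + mu • ((⟨0, 1, 0, 0⟩ : 𝕊) * star h)} :=
  affine_two_plane_of_solutions_general h g h0 hn gh
end

section
/- For c₀ ∈ ℝ, the set of split quaternion right zeros of P = t² + c₀ is {x ∈ 𝕊 : Re(x) = 0 and x x̄ = c₀} together with, in case c₀ ≤ 0, the two real zeros ±√(-c₀). In particular P always has infinitely many split quaternion zeros. -/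
open Quaternion

namespace QuaternionAlgebra

variable {R : Type*} {c₁ c₃ : R}

theorem sq_eq_two_re_smul_sub_mul_star [CommRing R] (a : ℍ[R,c₁,c₃]) :
    a ^ 2 = (2 * a.re) • a - a * star a := by
  have htrace : a + star a = ↑(2 * a.re) := by simpa using self_add_star' a
  rw [← mul_coe_eq_smul, ← htrace, mul_add, sq, add_sub_cancel_right]

theorem sq_add_coe_eq_zero_iff_of_re_eq_zero [CommRing R] {a : ℍ[R,c₁,c₃]} (ha : a.re = 0)
    (c : R) : a ^ 2 + c = 0 ↔ a * star a = c := by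
  rw [sq_eq_two_re_smul_sub_mul_star, ha, mul_zero, zero_smul, zero_sub, neg_add_eq_zero]

theorem coe_sq_add_coe_eq_zero_iff [CommRing R] (r c : R) :
    (r : ℍ[R,c₁,c₃]) ^ 2 + c = 0 ↔ r ^ 2 + c = 0 := by
  rw [← coe_pow, ← coe_add, ← coe_zero, coe_inj]

theorem eq_coe_re_of_sq_add_coe_eq_zero [Field R] [NeZero (2 : R)] {a : ℍ[R,c₁,c₃]}
    (ha : a.re ≠ 0) {c : R} (h : a ^ 2 + c = 0) : a = a.re := by
  have hscalar : (2 * a.re) • a = ↑((a * star a).re - c) := by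
    rw [sq_eq_two_re_smul_sub_mul_star] at h
    rw [coe_sub, ← mul_star_eq_coe, eq_sub_iff_add_eq, ← sub_eq_zero, ← h]
    abel
  apply eq_re_of_eq_coe (x := (2 * a.re)⁻¹ * ((a * star a).re - c))
  rw [← smul_coe, ← hscalar, smul_smul, inv_mul_cancel₀ (mul_ne_zero two_ne_zero ha), one_smul]

theorem sq_add_coe_eq_zero_iff [Field R] [NeZero (2 : R)] (a : ℍ[R,c₁,c₃]) (c : R) :
    a ^ 2 + c = 0 ↔ (a.re = 0 ∧ a * star a = c) ∨ ∃ r : R, a = r ∧ r ^ 2 + c = 0 := by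
  constructor
  · intro h
    by_cases hre : a.re = 0
    · exact .inl ⟨hre, (sq_add_coe_eq_zero_iff_of_re_eq_zero hre c).1 h⟩
    · have hreal := eq_coe_re_of_sq_add_coe_eq_zero hre h
      exact .inr ⟨a.re, hreal, by rwa [← coe_sq_add_coe_eq_zero_iff, ← hreal]⟩
  · rintro (⟨hre, h⟩ | ⟨r, rfl, hr⟩)
    · exact (sq_add_coe_eq_zero_iff_of_re_eq_zero hre c).2 h
    · exact (coe_sq_add_coe_eq_zero_iff r c).2 hr

end QuaternionAlgebra

theorem Real.sq_add_eq_zero_iff {r c : ℝ} :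
    r ^ 2 + c = 0 ↔ c ≤ 0 ∧ (r = √(-c) ∨ r = -√(-c)) := by
  constructor
  · intro h
    have hc : c ≤ 0 := by nlinarith [sq_nonneg r]
    refine ⟨hc, sq_eq_sq_iff_eq_or_eq_neg.1 ?_⟩
    rw [Real.sq_sqrt (neg_nonneg.2 hc)]
    linarith
  · rintro ⟨hc, rfl | rfl⟩ <;> simp [Real.sq_sqrt (neg_nonneg.2 hc)]

theorem infinite_setOf_re_eq_zero_and_mul_star_eq_coe (c : ℝ) :
    {x : 𝕊 | x.re = 0 ∧ x * star x = (c : 𝕊)}.Infinite := by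
  refine Set.infinite_of_injective_forall_mem
    (f := fun t : ℝ => (⟨0, (t ^ 2 + c + 1) / 2, (t ^ 2 + c - 1) / 2, t⟩ : 𝕊)) ?_ ?_
  · intro s t hst
    exact congrArg QuaternionAlgebra.imK hst
  · intro t
    refine ⟨rfl, ?_⟩
    ext <;> simp only [QuaternionAlgebra.star_mk, QuaternionAlgebra.mk_mul_mk,
      QuaternionAlgebra.re_coe, QuaternionAlgebra.imI_coe, QuaternionAlgebra.imJ_coe,
      QuaternionAlgebra.imK_coe] <;> ring

/-- The right zeros of `t² + c₀` (`c₀ ∈ ℝ`) are the vectorial split quaternions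
of norm `c₀` together with, when `c₀ ≤ 0`, the two real zeros `±√(-c₀)`.
In particular the zero set is always infinite. -/
theorem zeros_of_t_sq_add_real (c₀ : ℝ) :
    ({x : 𝕊 | x ^ 2 + (c₀ : 𝕊) = 0} =
      {x : 𝕊 | x.re = 0 ∧ x * star x = (c₀ : 𝕊)} ∪
      {x : 𝕊 | c₀ ≤ 0 ∧ (x = ((Real.sqrt (-c₀) : ℝ) : 𝕊) ∨
        x = -((Real.sqrt (-c₀) : ℝ) : 𝕊))}) ∧
    {x : 𝕊 | x ^ 2 + (c₀ : 𝕊) = 0}.Infinite := by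
  refine ⟨Set.ext fun x => ?_, ?_⟩
  · simp only [Set.mem_ofPred_eq, Set.mem_union, QuaternionAlgebra.sq_add_coe_eq_zero_iff,
      Real.sq_add_eq_zero_iff, ← QuaternionAlgebra.coe_neg]
    refine or_congr_right ⟨?_, ?_⟩
    · rintro ⟨r, rfl, hc, rfl | rfl⟩
      exacts [⟨hc, .inl rfl⟩, ⟨hc, .inr rfl⟩]
    · rintro ⟨hc, rfl | rfl⟩
      exacts [⟨_, rfl, hc, .inl rfl⟩, ⟨_, rfl, hc, .inr rfl⟩]
  · exact (infinite_setOf_re_eq_zero_and_mul_star_eq_coe c₀).mono fun _ hx =>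
      (QuaternionAlgebra.sq_add_coe_eq_zero_iff_of_re_eq_zero hx.1 c₀).2 hx.2
end

section
/- Let c ∈ 𝕊 ∖ ℝ be a non-real split quaternion. The polynomial P = t² + c has a split quaternion right zero (equivalently admits a factorization into monic linear factors) if and only if Im(c) · conj(Im(c)) > 0, or (c c̄ ≥ 0 and Re(c) < 0). -/
theorem QuaternionAlgebra.mem_range_algebraMap_iff {R : Type*} [CommRing R] {c₁ c₂ c₃ : R}
    (a : QuaternionAlgebra R c₁ c₂ c₃) :
    a ∈ Set.range (algebraMap R (QuaternionAlgebra R c₁ c₂ c₃)) ↔ a.im = 0 := by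
  constructor
  · rintro ⟨r, rfl⟩
    exact QuaternionAlgebra.im_coe r
  · intro h
    exact ⟨a.re, by rw [← a.re_add_im, h, add_zero]; rfl⟩

theorem Real.exists_pos_mul_add_eq_iff (b n : ℝ) :
    (∃ y > 0, 4 * y * (y + b) = n) ↔ 0 < n ∨ 0 ≤ b ^ 2 + n ∧ b < 0 := by
  constructor
  · rintro ⟨y, hy, rfl⟩
    by_cases hb : b < 0
    · exact Or.inr ⟨by nlinarith [sq_nonneg (2 * y + b)], hb⟩
    · have : 0 < y + b := by linarith
      exact Or.inl (by positivity)
  · intro h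
    have hD : 0 ≤ b ^ 2 + n := by rcases h with h | ⟨h, _⟩ <;> nlinarith
    have hs := Real.sq_sqrt hD
    refine ⟨(√(b ^ 2 + n) - b) / 2, ?_, by linear_combination hs⟩
    rcases h with h | ⟨_, h⟩
    · have : b < √(b ^ 2 + n) := by nlinarith [Real.sqrt_nonneg (b ^ 2 + n)]
      linarith
    · linarith [Real.sqrt_nonneg (b ^ 2 + n)]

namespace SplitQuaternion

theorem sq_add_eq_zero_iff (x c : 𝕊) :
    x ^ 2 + c = 0 ↔
      x.re ^ 2 - (x.imI ^ 2 - x.imJ ^ 2 - x.imK ^ 2) + c.re = 0 ∧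
        c.imI = -2 * x.re * x.imI ∧ c.imJ = -2 * x.re * x.imJ ∧ c.imK = -2 * x.re * x.imK := by
  simp only [QuaternionAlgebra.ext_iff, sq, QuaternionAlgebra.re_add, QuaternionAlgebra.imI_add,
    QuaternionAlgebra.imJ_add, QuaternionAlgebra.imK_add, QuaternionAlgebra.re_mul,
    QuaternionAlgebra.imI_mul, QuaternionAlgebra.imJ_mul, QuaternionAlgebra.imK_mul,
    QuaternionAlgebra.re_zero, QuaternionAlgebra.imI_zero, QuaternionAlgebra.imJ_zero,
    QuaternionAlgebra.imK_zero]
  refine and_congr ?_ (and_congr ?_ (and_congr ?_ ?_)) <;>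
    constructor <;> intro h <;> linear_combination h

theorem exists_sq_add_eq_zero_iff {c : 𝕊} (hc : c.im ≠ 0) :
    (∃ x : 𝕊, x ^ 2 + c = 0) ↔
      ∃ y > 0, 4 * y * (y + c.re) = c.imI ^ 2 - c.imJ ^ 2 - c.imK ^ 2 := by
  simp_rw [sq_add_eq_zero_iff]
  constructor
  · rintro ⟨x, hre, hI, hJ, hK⟩
    have hx : x.re ≠ 0 := by
      rintro h
      refine hc (QuaternionAlgebra.ext ?_ ?_ ?_ ?_) <;> simp_all
    refine ⟨x.re ^ 2, by positivity, ?_⟩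
    rw [hI, hJ, hK]
    linear_combination (4 * x.re ^ 2) * hre
  · rintro ⟨y, hy, hn⟩
    obtain ⟨a, ha0, rfl⟩ : ∃ a : ℝ, a ≠ 0 ∧ a ^ 2 = y :=
      ⟨√y, (Real.sqrt_pos.mpr hy).ne', Real.sq_sqrt hy.le⟩
    refine ⟨⟨a, -c.imI / (2 * a), -c.imJ / (2 * a), -c.imK / (2 * a)⟩, ?_, ?_, ?_, ?_⟩
    · field_simp
      linear_combination hn
    all_goals field_simp

end SplitQuaternion

/-- For non-real `c`, the polynomial `t² + c` has a split quaternion right zero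
iff `Im(c) conj(Im(c)) > 0`, or `c c̄ ≥ 0` and `Re(c) < 0`. -/
theorem factor_t_sq_add_c (c : 𝕊) (hc : c ∉ Set.range (algebraMap ℝ 𝕊)) :
    (∃ x : 𝕊, x ^ 2 + c = 0) ↔
      (c.imI ^ 2 - c.imJ ^ 2 - c.imK ^ 2 > 0 ∨
        (c.re ^ 2 + c.imI ^ 2 - c.imJ ^ 2 - c.imK ^ 2 ≥ 0 ∧ c.re < 0)) := by
  rw [QuaternionAlgebra.mem_range_algebraMap_iff] at hc
  rw [SplitQuaternion.exists_sq_add_eq_zero_iff hc, Real.exists_pos_mul_add_eq_iff]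
  simp only [add_sub_assoc]
end

section
/- Let b ∈ 𝕊 be a non-real split quaternion with Re(b) = 0 and b b̄ > 0, and let λ, μ ∈ ℝ. Then the polynomial P = t² + b t + λ + μ b has a split quaternion right zero. -/
/-!
A purely imaginary `b` with `b b̄ = r > 0` satisfies `b² = -r`, so `b / √r` is a square root of
`-1` and `ℝ[b]` is a copy of `ℂ`. The polynomial has its coefficients in `ℝ[b]`, and as a complex
quadratic it has a root.
-/

theorem Complex.exists_sq_add_mul_add_eq_zero (B C : ℂ) : ∃ z : ℂ, z ^ 2 + B * z + C = 0 := by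
  obtain ⟨z, hz⟩ :=
    exists_quadratic_eq_zero one_ne_zero (IsAlgClosed.exists_eq_mul_self (discrim 1 B C))
  exact ⟨z, by rw [← hz]; ring⟩

theorem exists_complex_algHom_apply_sqrt_mul_I {A : Type*} [Ring A] [Algebra ℝ A] {b : A} {r : ℝ}
    (hr : 0 < r) (hb : b * b = -algebraMap ℝ A r) :
    ∃ f : ℂ →ₐ[ℝ] A, f (√r * Complex.I) = b := by
  have hu : (√r)⁻¹ • b * (√r)⁻¹ • b = -1 := by
    rw [smul_mul_smul_comm, hb, smul_neg, Algebra.smul_def, ← map_mul, ← mul_inv,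
      Real.mul_self_sqrt hr.le, inv_mul_cancel₀ hr.ne', map_one]
  refine ⟨Complex.liftAux _ hu, ?_⟩
  simp [Complex.liftAux_apply, smul_smul, (Real.sqrt_pos.2 hr).ne']

theorem exists_sq_add_mul_add_eq_zero_of_mul_self_eq_neg {A : Type*} [Ring A] [Algebra ℝ A]
    {b : A} {r : ℝ} (hr : 0 < r) (hb : b * b = -algebraMap ℝ A r) (lam mu : ℝ) :
    ∃ x : A, x ^ 2 + b * x + algebraMap ℝ A lam + algebraMap ℝ A mu * b = 0 := by
  obtain ⟨f, hf⟩ := exists_complex_algHom_apply_sqrt_mul_I hr hb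
  obtain ⟨z, hz⟩ :=
    Complex.exists_sq_add_mul_add_eq_zero (√r * Complex.I) (lam + mu * (√r * Complex.I))
  refine ⟨f z, ?_⟩
  simpa [hf, add_assoc] using congrArg f hz

theorem QuaternionAlgebra.mul_self_eq_coe_of_re_eq_zero {R : Type*} [CommRing R] {c₁ c₃ : R}
    {a : QuaternionAlgebra R c₁ 0 c₃} (h : a.re = 0) :
    a * a = ((c₁ * a.imI ^ 2 + c₃ * a.imJ ^ 2 - c₁ * c₃ * a.imK ^ 2 : R) :
      QuaternionAlgebra R c₁ 0 c₃) := by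
  ext <;> simp only [re_mul, imI_mul, imJ_mul, imK_mul, re_coe, imI_coe, imJ_coe, imK_coe, h] <;>
    ring

theorem zero_exists_of_pos_norm_general (b : 𝕊)
    (hb0 : b.re = 0) (hpos : b.imI ^ 2 - b.imJ ^ 2 - b.imK ^ 2 > 0)
    (lam mu : ℝ) :
    ∃ x : 𝕊, x ^ 2 + b * x + (lam : 𝕊) + (mu : 𝕊) * b = 0 := by
  have hb : b * b = -algebraMap ℝ 𝕊 (b.imI ^ 2 - b.imJ ^ 2 - b.imK ^ 2) := by
    rw [QuaternionAlgebra.mul_self_eq_coe_of_re_eq_zero hb0, QuaternionAlgebra.coe_algebraMap,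
      ← QuaternionAlgebra.coe_neg]
    congr 1
    ring
  simpa only [QuaternionAlgebra.coe_algebraMap] using
    exists_sq_add_mul_add_eq_zero_of_mul_self_eq_neg hpos hb lam mu

/-- If `b` is non-real, vectorial and of positive norm, then
`t² + b t + λ + μ b` has a split quaternion right zero. -/
theorem zero_exists_of_pos_norm (b : 𝕊) (hb : b ∉ Set.range (algebraMap ℝ 𝕊))
    (hb0 : b.re = 0) (hpos : b.imI ^ 2 - b.imJ ^ 2 - b.imK ^ 2 > 0)
    (lam mu : ℝ) :
    ∃ x : 𝕊, x ^ 2 + b * x + (lam : 𝕊) + (mu : 𝕊) * b = 0 :=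
  zero_exists_of_pos_norm_general b hb0 hpos lam mu
end
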